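/- arXiv:2509.01159 — 5 statements merged into one kernel-verified Lean document; each statement's English description precedes it below -/
import Mathlib

section
/- Let G(x) = A_0 + x_1 A_1 + ... + x_n A_n with A_0,...,A_n q×q symmetric real matrices, and K = {x ∈ ℝ^n : G(x) ⪰ 0}. If K is compact with nonempty interior, then for each i ∈ {1,...,n} there exists a q×q symmetric real matrix U_i such that x_i = ⟨U_i, G(x)⟩ identically as polynomials in x. -/
/-!
If `c • A₀ + ∑ vₗ Aₗ = 0` with `v ≠ 0` (and, after a sign change, `c ≥ 0`), then for any
`x ∈ K` the direction `d = c • x - v` satisfies `∑ dₗ Aₗ = c • G(x)`, so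
`G(x + t d) = (1 + t c) G(x) ⪰ 0` for all `t ≥ 0`. Since `K` has nonempty interior it is not a
single point, so `d ≠ 0` for a suitable `x ∈ K`, and `K` contains a ray: it is unbounded.
Hence the homogenized pencil `(c, v) ↦ c • A₀ + ∑ vₗ Aₗ` has kernel inside that of
`(c, v) ↦ vᵢ`, so the latter is a linear combination of the entries of the pencil, i.e.
`vᵢ = ⟨U, c • A₀ + ∑ vₗ Aₗ⟩`; symmetrizing `U` does not change `⟨U, M⟩` on symmetric `M`.
-/

open scoped BigOperators

noncomputable section

/-- Trace inner product `⟨A, B⟩ = tr(Aᵀ B) = ∑ᵢⱼ Aᵢⱼ Bᵢⱼ` of two real matrices. -/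
def tipR {ι : Type*} [Fintype ι] (A B : Matrix ι ι ℝ) : ℝ :=
  ∑ i, ∑ j, A i j * B i j

open Matrix

theorem not_isBounded_of_forall_add_smul_mem {E : Type*} [NormedAddCommGroup E]
    [NormedSpace ℝ E] {s : Set E} {x d : E} (hd : d ≠ 0)
    (hray : ∀ t : ℝ, 0 ≤ t → x + t • d ∈ s) : ¬ Bornology.IsBounded s := by
  intro hs
  obtain ⟨C, hC⟩ := isBounded_iff_forall_norm_le.mp hs
  have hd' : 0 < ‖d‖ := norm_pos_iff.mpr hd
  set t := (|C| + ‖x‖ + 1) / ‖d‖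
  have ht : 0 ≤ t := by positivity
  have htd : ‖t • d‖ = |C| + ‖x‖ + 1 := by
    rw [norm_smul, Real.norm_of_nonneg ht, div_mul_cancel₀ _ hd'.ne']
  have := norm_sub_norm_le (t • d) (-x)
  rw [sub_neg_eq_add, add_comm, norm_neg, htd] at this
  linarith [hC _ (hray t ht), le_abs_self C]

section Pencil

variable {m κ : Type*} [Fintype κ] {A0 : Matrix m m ℝ} {A : κ → Matrix m m ℝ}

theorem eq_zero_of_smul_add_sum_smul_eq_zero
    (hbdd : Bornology.IsBounded {x : κ → ℝ | (A0 + ∑ l, x l • A l).PosSemidef})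
    (hint : (interior {x : κ → ℝ | (A0 + ∑ l, x l • A l).PosSemidef}).Nonempty)
    {c : ℝ} {v : κ → ℝ} (h : c • A0 + ∑ l, v l • A l = 0) : v = 0 := by
  by_contra hv
  wlog hc : 0 ≤ c generalizing c v
  · refine this (c := -c) (v := -v) ?_ (neg_ne_zero.mpr hv) (by linarith)
    simp only [Pi.neg_apply, neg_smul, Finset.sum_neg_distrib, ← neg_add, h, neg_zero]
  set K := {x : κ → ℝ | (A0 + ∑ l, x l • A l).PosSemidef}
  have : Nontrivial (κ → ℝ) := ⟨⟨v, 0, hv⟩⟩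
  obtain ⟨x, hxK, hxv⟩ : ∃ x ∈ K, c • x ≠ v := by
    by_contra! hKv
    obtain ⟨y, hy⟩ := hint
    have hc0 : c ≠ 0 := by
      rintro rfl
      exact hv (by simpa using (hKv y (interior_subset hy)).symm)
    have hKy : K ⊆ {y} := fun z hz =>
      smul_right_injective _ hc0 ((hKv z hz).trans (hKv y (interior_subset hy)).symm)
    simpa [interior_singleton] using interior_mono hKy hy
  have hsum : ∑ l, v l • A l = -(c • A0) := eq_neg_of_add_eq_zero_right h
  refine not_isBounded_of_forall_add_smul_mem (x := x) (sub_ne_zero.mpr hxv) (fun t ht => ?_) hbdd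
  have hray : A0 + ∑ l, (x + t • (c • x - v)) l • A l = (1 + t * c) • (A0 + ∑ l, x l • A l) := by
    simp only [Pi.add_apply, Pi.smul_apply, Pi.sub_apply, smul_eq_mul, add_smul, mul_sub, sub_smul,
      mul_smul, Finset.sum_add_distrib, Finset.sum_sub_distrib, ← Finset.smul_sum, hsum]
    module
  simp only [K, Set.mem_ofPred_eq, hray]
  exact hxK.smul (by positivity)

end Pencil

section TraceInnerProduct

variable {m : Type*} [Fintype m]

theorem exists_tipR_eq_of_ker_le {E : Type*} [AddCommGroup E] [Module ℝ E]
    {P : E →ₗ[ℝ] Matrix m m ℝ} {f : E →ₗ[ℝ] ℝ} (h : LinearMap.ker P ≤ LinearMap.ker f) :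
    ∃ U : Matrix m m ℝ, ∀ x, f x = tipR U (P x) := by
  set L : m × m → E →ₗ[ℝ] ℝ := fun p => entryLinearMap ℝ ℝ p.1 p.2 ∘ₗ P
  have hL : ⨅ p, LinearMap.ker (L p) ≤ LinearMap.ker f := fun x hx => h <| by
    ext a b
    exact (Submodule.mem_iInf _).mp hx (a, b)
  obtain ⟨c, hc⟩ := (Submodule.mem_span_range_iff_exists_fun ℝ).mp (mem_span_of_iInf_ker_le_ker hL)
  refine ⟨of fun a b => c (a, b), fun x => ?_⟩
  simp [← hc, L, tipR, Fintype.sum_prod_type]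

theorem exists_isSymm_tipR_eq (U : Matrix m m ℝ) :
    ∃ V : Matrix m m ℝ, V.IsSymm ∧ ∀ M : Matrix m m ℝ, M.IsSymm → tipR V M = tipR U M := by
  refine ⟨(2⁻¹ : ℝ) • (U + Uᵀ), by simp [IsSymm, add_comm], fun M hM => ?_⟩
  have hswap : ∑ a, ∑ b, U b a * M a b = tipR U M := by
    rw [Finset.sum_comm]
    simp [tipR, ← hM.apply]
  calc tipR ((2⁻¹ : ℝ) • (U + Uᵀ)) M = 2⁻¹ * (tipR U M + ∑ a, ∑ b, U b a * M a b) := by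
        simp only [tipR, Matrix.smul_apply, Matrix.add_apply, transpose_apply, smul_eq_mul,
          mul_assoc, add_mul, mul_add, Finset.mul_sum, Finset.sum_add_distrib]
    _ = tipR U M := by rw [hswap]; ring

end TraceInnerProduct

/-- If `K = {x : G(x) := A₀ + ∑ xₗ Aₗ ⪰ 0}` is compact with nonempty interior, then for
each coordinate `i` there is a symmetric matrix `Uᵢ` with `xᵢ = ⟨Uᵢ, G(x)⟩`
identically in `x`. -/
theorem coordinate_representation {n q : ℕ}
    (A0 : Matrix (Fin q) (Fin q) ℝ) (A : Fin n → Matrix (Fin q) (Fin q) ℝ)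
    (hA0 : A0.IsSymm) (hA : ∀ l, (A l).IsSymm)
    (K : Set (Fin n → ℝ))
    (hK : K = {x | (A0 + ∑ l, x l • A l).PosSemidef})
    (hcomp : IsCompact K)
    (hint : (interior K).Nonempty) :
    ∀ i : Fin n, ∃ U : Matrix (Fin q) (Fin q) ℝ, U.IsSymm ∧
      ∀ x : Fin n → ℝ, x i = tipR U (A0 + ∑ l, x l • A l) := by
  subst hK
  intro i
  set P := (LinearMap.toSpanSingleton ℝ _ A0).coprod (Fintype.linearCombination ℝ A)
  have hker : LinearMap.ker P ≤ LinearMap.ker (LinearMap.proj i ∘ₗ LinearMap.snd ℝ ℝ _) := by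
    rintro ⟨c, v⟩ hcv
    have hv := eq_zero_of_smul_add_sum_smul_eq_zero hcomp.isBounded hint
      (by simpa [P, Fintype.linearCombination_apply] using hcv)
    simp [hv]
  obtain ⟨U, hU⟩ := exists_tipR_eq_of_ker_le hker
  obtain ⟨V, hVsymm, hV⟩ := exists_isSymm_tipR_eq U
  have hG : ∀ x : Fin n → ℝ, (A0 + ∑ l, x l • A l).IsSymm := fun x =>
    hA0.add (by simp [IsSymm, transpose_sum, (hA _).eq])
  refine ⟨V, hVsymm, fun x => ?_⟩
  rw [hV _ (hG x)]
  simpa [P, Fintype.linearCombination_apply] using hU (1, x)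

end
end

section
/- Let G(x) be a q×q symmetric matrix with entries in ℝ[x_1,...,x_n], and let H(G) ⊆ ℝ[x_1,...,x_n] be the set of all polynomials of the form λ_0 + Σ_{k=1}^m ⟨Λ_k, G(x)^{⊗k}⟩ where m ∈ ℕ, λ_0 ≥ 0 is a real number, and each Λ_k is a q^k × q^k positive semidefinite real matrix. Then H(G) is closed under addition and multiplication: if f, g ∈ H(G) then f + g ∈ H(G) and f·g ∈ H(G). -/
open scoped BigOperators

noncomputable section

/-- The `k`-fold Kronecker power of a matrix, with rows and columns indexed by
functions `Fin k → ι` (a type of cardinality `(#ι)^k`):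
`(M^{⊗k})_{a,b} = ∏ᵢ M_{a i, b i}`. -/
def kronPow {ι : Type*} {R : Type*} [CommMonoid R] (M : Matrix ι ι R) (k : ℕ) :
    Matrix (Fin k → ι) (Fin k → ι) R :=
  Matrix.of fun a b => ∏ i, M (a i) (b i)

/-- Trace inner product `⟨Λ, B⟩ = tr(Λᵀ B) = ∑ᵢⱼ Λᵢⱼ Bᵢⱼ` of a real matrix against a
polynomial matrix. -/
def tipP {n : ℕ} {ι : Type*} [Fintype ι] (Λ : Matrix ι ι ℝ)
    (B : Matrix ι ι (MvPolynomial (Fin n) ℝ)) : MvPolynomial (Fin n) ℝ :=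
  ∑ i, ∑ j, MvPolynomial.C (Λ i j) * B i j

/-- The cone `H(G)` of all polynomials of the form
`λ₀ + ∑_{k=1}^m ⟨Λ_k, G(x)^{⊗k}⟩` with `λ₀ ≥ 0` and each `Λ_k` positive semidefinite. -/
def Hset {n : ℕ} {ι : Type*} [Fintype ι]
    (G : Matrix ι ι (MvPolynomial (Fin n) ℝ)) : Set (MvPolynomial (Fin n) ℝ) :=
  { p | ∃ (m : ℕ) (lam0 : ℝ) (Λ : (k : ℕ) → Matrix (Fin k → ι) (Fin k → ι) ℝ),
      0 ≤ lam0 ∧ (∀ k ∈ Finset.Icc 1 m, (Λ k).PosSemidef) ∧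
      p = MvPolynomial.C lam0 + ∑ k ∈ Finset.Icc 1 m, tipP (Λ k) (kronPow G k) }

/-! Every element of `H(G)` is a finite sum of atoms `⟨Λ, G^{⊗k}⟩` with `Λ` positive
semidefinite, the constant `λ₀` being the atom `⟨λ₀ • 1, G^{⊗0}⟩`. Closure under addition is
padding two expansions to a common length. For products, identifying
`(Fin k → ι) × (Fin l → ι)` with `Fin (k + l) → ι` gives
`⟨Λ, G^{⊗k}⟩ ⟨M, G^{⊗l}⟩ = ⟨Λ ⊗ M, G^{⊗(k+l)}⟩`, and a Kronecker product of positive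
semidefinite matrices is positive semidefinite, so a product of atoms is an atom. -/

open MvPolynomial Finset Matrix
open scoped Kronecker

section TraceInnerProduct

variable {n : ℕ} {ι κ : Type*} [Fintype ι] [Fintype κ]

lemma tipP_zero_left (B : Matrix ι ι (MvPolynomial (Fin n) ℝ)) : tipP 0 B = 0 := by
  simp [tipP]

lemma tipP_add_left (Λ M : Matrix ι ι ℝ) (B : Matrix ι ι (MvPolynomial (Fin n) ℝ)) :
    tipP (Λ + M) B = tipP Λ B + tipP M B := by
  simp [tipP, add_mul, sum_add_distrib]

lemma tipP_submatrix_equiv (e : κ ≃ ι) (Λ : Matrix ι ι ℝ)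
    (B : Matrix ι ι (MvPolynomial (Fin n) ℝ)) :
    tipP (Λ.submatrix e e) (B.submatrix e e) = tipP Λ B := by
  simp only [tipP, submatrix_apply]
  exact (sum_congr rfl fun i _ => e.sum_comp fun j => C (Λ (e i) j) * B (e i) j).trans
    (e.sum_comp fun i => ∑ j, C (Λ i j) * B i j)

lemma tipP_kronecker (Λ : Matrix ι ι ℝ) (M : Matrix κ κ ℝ)
    (B : Matrix ι ι (MvPolynomial (Fin n) ℝ)) (D : Matrix κ κ (MvPolynomial (Fin n) ℝ)) :
    tipP (Λ ⊗ₖ M) (B ⊗ₖ D) = tipP Λ B * tipP M D := by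
  simp only [tipP, kroneckerMap_apply, Fintype.sum_prod_type, sum_mul_sum, map_mul]
  exact sum_congr rfl fun i _ => sum_congr rfl fun k _ =>
    sum_congr rfl fun j _ => sum_congr rfl fun l _ => by ring

end TraceInnerProduct

lemma kronPow_add_submatrix_appendEquiv {ι R : Type*} [CommMonoid R] (G : Matrix ι ι R)
    (k l : ℕ) :
    (kronPow G (k + l)).submatrix (Fin.appendEquiv k l) (Fin.appendEquiv k l) =
      kronPow G k ⊗ₖ kronPow G l := by
  ext ⟨a, a'⟩ ⟨b, b'⟩
  simp [kronPow, Fin.prod_univ_add]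

section KronPow

variable {n : ℕ} {ι : Type*} [Fintype ι] (G : Matrix ι ι (MvPolynomial (Fin n) ℝ))

lemma tipP_kronPow_zero (Λ : Matrix (Fin 0 → ι) (Fin 0 → ι) ℝ) :
    tipP Λ (kronPow G 0) = C (Λ default default) := by
  simp [tipP, kronPow]

lemma tipP_kronPow_mul_tipP_kronPow {k l : ℕ} (Λ : Matrix (Fin k → ι) (Fin k → ι) ℝ)
    (M : Matrix (Fin l → ι) (Fin l → ι) ℝ) :
    tipP Λ (kronPow G k) * tipP M (kronPow G l) =
      tipP ((Λ ⊗ₖ M).submatrix (Fin.appendEquiv k l).symm (Fin.appendEquiv k l).symm)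
        (kronPow G (k + l)) := by
  rw [← tipP_kronecker, ← kronPow_add_submatrix_appendEquiv, ← tipP_submatrix_equiv
    (Fin.appendEquiv k l), submatrix_submatrix]
  simp

end KronPow

section Hset

variable {n : ℕ} {ι : Type*} [Fintype ι] {G : Matrix ι ι (MvPolynomial (Fin n) ℝ)}

lemma C_mem_Hset {c : ℝ} (hc : 0 ≤ c) : C c ∈ Hset G :=
  ⟨0, c, fun _ => 0, hc, fun _ _ => PosSemidef.zero, by simp⟩

lemma exists_posSemidef_sum_tipP_Icc_eq {m m' : ℕ} (h : m ≤ m')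
    {Λ : (k : ℕ) → Matrix (Fin k → ι) (Fin k → ι) ℝ} (hΛ : ∀ k ∈ Icc 1 m, (Λ k).PosSemidef) :
    ∃ Λ' : (k : ℕ) → Matrix (Fin k → ι) (Fin k → ι) ℝ, (∀ k ∈ Icc 1 m', (Λ' k).PosSemidef) ∧
      ∑ k ∈ Icc 1 m, tipP (Λ k) (kronPow G k) = ∑ k ∈ Icc 1 m', tipP (Λ' k) (kronPow G k) := by
  refine ⟨fun k => if k ≤ m then Λ k else 0, fun k hk => ?_, ?_⟩
  · dsimp only
    split_ifs with hkm
    · exact hΛ k (mem_Icc.mpr ⟨(mem_Icc.mp hk).1, hkm⟩)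
    · exact PosSemidef.zero
  · have hfilter : (Icc 1 m').filter (· ≤ m) = Icc 1 m := by
      ext k
      simp only [mem_filter, mem_Icc]
      omega
    simp only [apply_ite (tipP · (kronPow G _)), tipP_zero_left, ← sum_filter, hfilter]

lemma add_mem_Hset {p r : MvPolynomial (Fin n) ℝ} (hp : p ∈ Hset G) (hr : r ∈ Hset G) :
    p + r ∈ Hset G := by
  obtain ⟨m₁, a, Λ₁, ha, hΛ₁, rfl⟩ := hp
  obtain ⟨m₂, b, Λ₂, hb, hΛ₂, rfl⟩ := hr
  obtain ⟨Λ₁', hΛ₁', h₁⟩ := exists_posSemidef_sum_tipP_Icc_eq (G := G) (le_max_left m₁ m₂) hΛ₁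
  obtain ⟨Λ₂', hΛ₂', h₂⟩ := exists_posSemidef_sum_tipP_Icc_eq (G := G) (le_max_right m₁ m₂) hΛ₂
  refine ⟨max m₁ m₂, a + b, Λ₁' + Λ₂', add_nonneg ha hb,
    fun k hk => (hΛ₁' k hk).add (hΛ₂' k hk), ?_⟩
  simp only [h₁, h₂, Pi.add_apply, tipP_add_left, sum_add_distrib, map_add]
  ring

lemma sum_mem_Hset {α : Type*} {s : Finset α} {p : α → MvPolynomial (Fin n) ℝ}
    (hp : ∀ i ∈ s, p i ∈ Hset G) : ∑ i ∈ s, p i ∈ Hset G := by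
  classical
  induction s using Finset.induction_on with
  | empty => simpa using C_mem_Hset (G := G) le_rfl
  | insert i s hi ih =>
    rw [sum_insert hi]
    exact add_mem_Hset (hp i (mem_insert_self i s)) (ih fun j hj => hp j (mem_insert_of_mem hj))

lemma tipP_kronPow_mem_Hset {k : ℕ} {Λ : Matrix (Fin k → ι) (Fin k → ι) ℝ}
    (hΛ : Λ.PosSemidef) : tipP Λ (kronPow G k) ∈ Hset G := by
  classical
  rcases Nat.eq_zero_or_pos k with rfl | hk
  · rw [tipP_kronPow_zero]
    exact C_mem_Hset hΛ.diag_nonneg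
  refine ⟨k, 0, Pi.single k Λ, le_rfl, fun j _ => ?_, ?_⟩
  · by_cases hj : j = k
    · subst hj
      simpa using hΛ
    · simpa [Pi.single_eq_of_ne hj] using PosSemidef.zero
  · rw [sum_eq_single_of_mem k (mem_Icc.mpr ⟨hk, le_rfl⟩)
      fun j _ hj => by rw [Pi.single_eq_of_ne hj, tipP_zero_left]]
    simp

lemma exists_eq_sum_tipP_kronPow_of_mem_Hset {p : MvPolynomial (Fin n) ℝ} (hp : p ∈ Hset G) :
    ∃ (s : Finset ℕ) (Λ : (k : ℕ) → Matrix (Fin k → ι) (Fin k → ι) ℝ),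
      (∀ k ∈ s, (Λ k).PosSemidef) ∧ p = ∑ k ∈ s, tipP (Λ k) (kronPow G k) := by
  classical
  obtain ⟨m, a, Λ, ha, hΛ, rfl⟩ := hp
  have h0 : 0 ∉ Icc 1 m := by simp
  refine ⟨insert 0 (Icc 1 m), Function.update Λ 0 (a • 1), fun k hk => ?_, ?_⟩
  · rcases mem_insert.mp hk with rfl | hk
    · simpa using PosSemidef.one.smul ha
    · rw [Function.update_of_ne (ne_of_mem_of_not_mem hk h0)]
      exact hΛ k hk
  · rw [sum_insert h0, Function.update_self, tipP_kronPow_zero]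
    refine congrArg₂ (· + ·) (by simp) (sum_congr rfl fun k hk => ?_)
    rw [Function.update_of_ne (ne_of_mem_of_not_mem hk h0)]

end Hset

theorem Hset_add_mul_closed_general {n q : ℕ}
    (G : Matrix (Fin q) (Fin q) (MvPolynomial (Fin n) ℝ))
    (f g : MvPolynomial (Fin n) ℝ) (hf : f ∈ Hset G) (hg : g ∈ Hset G) :
    f + g ∈ Hset G ∧ f * g ∈ Hset G := by
  refine ⟨add_mem_Hset hf hg, ?_⟩
  obtain ⟨s, Λ, hΛ, rfl⟩ := exists_eq_sum_tipP_kronPow_of_mem_Hset hf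
  obtain ⟨t, M, hM, rfl⟩ := exists_eq_sum_tipP_kronPow_of_mem_Hset hg
  rw [sum_mul_sum]
  refine sum_mem_Hset fun k hk => sum_mem_Hset fun l hl => ?_
  rw [tipP_kronPow_mul_tipP_kronPow]
  exact tipP_kronPow_mem_Hset (((hΛ k hk).kronecker (hM l hl)).submatrix _)

/-- The cone `H(G)` is closed under addition and multiplication. -/
theorem Hset_add_mul_closed {n q : ℕ}
    (G : Matrix (Fin q) (Fin q) (MvPolynomial (Fin n) ℝ)) (hG : G.IsSymm)
    (f g : MvPolynomial (Fin n) ℝ) (hf : f ∈ Hset G) (hg : g ∈ Hset G) :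
    f + g ∈ Hset G ∧ f * g ∈ Hset G :=
  Hset_add_mul_closed_general G f g hf hg

end
end

section
/- Let G(x) be a q×q symmetric matrix with entries in ℝ[x_1,...,x_n], let H(G) ⊆ ℝ[x_1,...,x_n] be the set of all polynomials of the form λ_0 + Σ_{k=1}^m ⟨Λ_k, G(x)^{⊗k}⟩ where m ∈ ℕ, λ_0 ≥ 0 is a real number, and each Λ_k is a q^k × q^k positive semidefinite real matrix, and let π(H(G)) be the set of linear functionals L : ℝ[x_1,...,x_n] → ℝ with L(1) = 1 and L(f) ≥ 0 for all f ∈ H(G), identified with the points (L(x^α))_{α ∈ ℕ^n} of ℝ^{ℕ^n} equipped with the product topology. If the constant polynomial 1 lies in the algebraic interior of H(G), then π(H(G)) is compact. -/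
open scoped BigOperators
noncomputable section

open MvPolynomial in
lemma sum_coeff_subset {n : ℕ} (y : (Fin n →₀ ℕ) → ℝ) (p : MvPolynomial (Fin n) ℝ)
    {s : Finset (Fin n →₀ ℕ)} (h : p.support ⊆ s) :
    ∑ α ∈ p.support, p.coeff α * y α = ∑ α ∈ s, p.coeff α * y α :=
  Finset.sum_subset h (fun α _ hα => by
    simp [MvPolynomial.notMem_support_iff.mp hα])

open MvPolynomial in
def Lfunc {n : ℕ} (y : (Fin n →₀ ℕ) → ℝ) : MvPolynomial (Fin n) ℝ →ₗ[ℝ] ℝ where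
  toFun p := ∑ α ∈ p.support, p.coeff α * y α
  map_add' p q := by
    rw [sum_coeff_subset y (p + q) (MvPolynomial.support_add),
      sum_coeff_subset y p (Finset.subset_union_left),
      sum_coeff_subset y q (Finset.subset_union_right), ← Finset.sum_add_distrib]
    refine Finset.sum_congr rfl fun α _ => ?_
    rw [MvPolynomial.coeff_add]; ring
  map_smul' c p := by
    show ∑ α ∈ (c • p).support, (c • p).coeff α * y α = c • ∑ α ∈ p.support, p.coeff α * y α
    have hsub : (c • p).support ⊆ p.support := MvPolynomial.support_smul
    rw [sum_coeff_subset y (c • p) hsub]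
    simp only [MvPolynomial.coeff_smul, smul_eq_mul, RingHom.id_apply, Finset.mul_sum]
    refine Finset.sum_congr rfl fun α _ => by ring

lemma Lfunc_monomial {n : ℕ} (y : (Fin n →₀ ℕ) → ℝ) (α : Fin n →₀ ℕ) :
    Lfunc y (MvPolynomial.monomial α 1) = y α := by
  simp [Lfunc, MvPolynomial.support_monomial, MvPolynomial.coeff_monomial]

lemma Lfunc_continuous {n : ℕ} (f : MvPolynomial (Fin n) ℝ) :
    Continuous fun y : (Fin n →₀ ℕ) → ℝ => Lfunc y f := by
  simp only [Lfunc, LinearMap.coe_mk, AddHom.coe_mk]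
  exact continuous_finset_sum _ fun α _ => continuous_const.mul (continuous_apply α)

lemma Lfunc_eq {n : ℕ} (y : (Fin n →₀ ℕ) → ℝ) (L : MvPolynomial (Fin n) ℝ →ₗ[ℝ] ℝ)
    (h : ∀ α, y α = L (MvPolynomial.monomial α 1)) (f : MvPolynomial (Fin n) ℝ) :
    L f = Lfunc y f := by
  conv_lhs => rw [f.as_sum]
  rw [map_sum]
  refine Finset.sum_congr rfl fun α _ => ?_
  have hm : MvPolynomial.monomial α (f.coeff α) = (f.coeff α) • MvPolynomial.monomial α 1 := by
    rw [MvPolynomial.smul_monomial, smul_eq_mul, mul_one]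
  rw [hm, map_smul, smul_eq_mul, ← h α]

/-- If the constant polynomial `1` is an algebraic interior point of `H(G)`
(for every `f` there is `ε > 0` with `1 + λ·f ∈ H(G)` for `|λ| < ε`), then the set
`π(H(G))` of linear functionals `L : ℝ[x] → ℝ` with `L(1) = 1` and `L ≥ 0` on `H(G)`,
identified with the family of moment sequences `(L(x^α))_{α ∈ ℕⁿ} ∈ ℝ^{ℕⁿ}` (with the
product topology), is compact. -/
theorem pi_Hset_isCompact {n q : ℕ}
    (G : Matrix (Fin q) (Fin q) (MvPolynomial (Fin n) ℝ)) (hG : G.IsSymm)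
    (halg : ∀ f : MvPolynomial (Fin n) ℝ, ∃ ε : ℝ, 0 < ε ∧
      ∀ lam : ℝ, |lam| < ε → 1 + MvPolynomial.C lam * f ∈ Hset G) :
    IsCompact {y : (Fin n →₀ ℕ) → ℝ |
      ∃ L : MvPolynomial (Fin n) ℝ →ₗ[ℝ] ℝ,
        L 1 = 1 ∧ (∀ f ∈ Hset G, 0 ≤ L f) ∧
        ∀ α : Fin n →₀ ℕ, y α = L (MvPolynomial.monomial α 1)} := by
  classical
  set S : Set ((Fin n →₀ ℕ) → ℝ) := {y : (Fin n →₀ ℕ) → ℝ |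
      ∃ L : MvPolynomial (Fin n) ℝ →ₗ[ℝ] ℝ,
        L 1 = 1 ∧ (∀ f ∈ Hset G, 0 ≤ L f) ∧
        ∀ α : Fin n →₀ ℕ, y α = L (MvPolynomial.monomial α 1)} with hS
  have key : ∀ α : Fin n →₀ ℕ, ∃ c : ℝ, ∀ y ∈ S, y α ∈ Set.Icc (-c) c := by
    intro α
    obtain ⟨ε, hε, hmem⟩ := halg (MvPolynomial.monomial α 1)
    refine ⟨2 / ε, ?_⟩
    rintro y ⟨L, hL1, hLpos, hLy⟩
    have lmul : ∀ c : ℝ, L (1 + MvPolynomial.C c * MvPolynomial.monomial α 1)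
        = 1 + c * y α := by
      intro c
      rw [map_add, hL1, MvPolynomial.C_mul', map_smul, ← hLy, smul_eq_mul]
    have h1 := hLpos _ (hmem (ε / 2) (by rw [abs_of_pos (by linarith)]; linarith))
    have h2 := hLpos _ (hmem (-(ε / 2)) (by rw [abs_neg, abs_of_pos (by linarith)]; linarith))
    rw [lmul] at h1
    rw [lmul] at h2
    constructor
    · rw [neg_le, le_div_iff₀ hε]; nlinarith
    · rw [le_div_iff₀ hε]; nlinarith
  choose c hc using key
  have hSeq : S = {y : (Fin n →₀ ℕ) → ℝ | Lfunc y 1 = 1} ∩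
      ⋂ f ∈ Hset G, {y : (Fin n →₀ ℕ) → ℝ | 0 ≤ Lfunc y f} := by
    ext y
    constructor
    · rintro ⟨L, hL1, hLpos, hLy⟩
      refine ⟨?_, ?_⟩
      · show Lfunc y 1 = 1
        rw [← Lfunc_eq y L hLy 1, hL1]
      · simp only [Set.mem_iInter, Set.mem_setOf_eq]
        intro f hf
        rw [← Lfunc_eq y L hLy f]
        exact hLpos f hf
    · rintro ⟨h1, h2⟩
      simp only [Set.mem_iInter, Set.mem_setOf_eq] at h1 h2
      exact ⟨Lfunc y, h1, h2, fun α => (Lfunc_monomial y α).symm⟩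
  have hclosed : IsClosed S := by
    rw [hSeq]
    refine IsClosed.inter (isClosed_eq (Lfunc_continuous 1) continuous_const) ?_
    exact isClosed_biInter fun f hf => isClosed_le continuous_const (Lfunc_continuous f)
  refine IsCompact.of_isClosed_subset
    (isCompact_univ_pi fun α => isCompact_Icc (a := -(c α)) (b := c α)) hclosed ?_
  intro y hy α _
  exact hc α y hy

end
end

section
/- Let A and B be real s×t matrices. If the null space of A is contained in the null space of B, then for every positive integer k the null space of the k-fold Kronecker product A^{⊗k} is contained in the null space of B^{⊗k}. -/
open scoped BigOperators

noncomputable section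

/-- The `k`-fold Kronecker power of a (possibly rectangular) matrix, with rows and
columns indexed by functions (`(Fin k → Fin s)` has cardinality `s^k`):
`(M^{⊗k})_{a,b} = ∏ᵢ M_{a i, b i}`. -/
def kronPowR {s t : ℕ} (M : Matrix (Fin s) (Fin t) ℝ) (k : ℕ) :
    Matrix (Fin k → Fin s) (Fin k → Fin t) ℝ :=
  Matrix.of fun a b => ∏ i, M (a i) (b i)

/-- Factorization: if `Null(A) ⊆ Null(B)` then `B = C * A` for some `C`. -/
lemma exists_factor {s t : ℕ} (A B : Matrix (Fin s) (Fin t) ℝ)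
    (h : ∀ v : Fin t → ℝ, A.mulVec v = 0 → B.mulVec v = 0) :
    ∃ C : Matrix (Fin s) (Fin s) ℝ, B = C * A := by
  set f := A.mulVecLin
  set g := B.mulVecLin
  have hker : LinearMap.ker f ≤ LinearMap.ker g := fun v hv => h v hv
  -- lift g through the quotient by ker f
  let q : ((Fin t → ℝ) ⧸ LinearMap.ker f) →ₗ[ℝ] (Fin s → ℝ) :=
    (LinearMap.ker f).liftQ g hker
  let φ : LinearMap.range f →ₗ[ℝ] (Fin s → ℝ) :=
    q.comp (f.quotKerEquivRange.symm : LinearMap.range f →ₗ[ℝ] _)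
  obtain ⟨h', hh'⟩ := φ.exists_extend
  have key : ∀ v, h' (f v) = g v := by
    intro v
    have h1 : h' (f v) = φ ⟨f v, LinearMap.mem_range_self f v⟩ := by
      have := congrArg (fun ψ => ψ ⟨f v, LinearMap.mem_range_self f v⟩) hh'
      simpa using this
    rw [h1]
    show q (f.quotKerEquivRange.symm ⟨f v, LinearMap.mem_range_self f v⟩) = g v
    rw [LinearMap.quotKerEquivRange_symm_apply_image f v (LinearMap.mem_range_self f v)]
    simp [q]
  refine ⟨LinearMap.toMatrix' h', Matrix.toLin'.injective ?_⟩
  rw [Matrix.toLin'_mul, Matrix.toLin'_toMatrix']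
  refine LinearMap.ext fun w => ?_
  simp only [LinearMap.comp_apply, Matrix.toLin'_apply]
  exact (key w).symm

lemma kronPow_mul {s t : ℕ} (C : Matrix (Fin s) (Fin s) ℝ) (A : Matrix (Fin s) (Fin t) ℝ)
    (k : ℕ) : kronPowR (C * A) k = kronPowR C k * kronPowR A k := by
  ext a b
  simp only [kronPowR, Matrix.mul_apply, Matrix.of_apply]
  rw [Finset.prod_univ_sum, Fintype.piFinset_univ]
  exact Finset.sum_congr rfl fun x _ => Finset.prod_mul_distrib

/-- If `Null(A) ⊆ Null(B)` for real `s × t` matrices `A, B`, then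
`Null(A^{⊗k}) ⊆ Null(B^{⊗k})` for every positive integer `k`. -/
theorem kron_null_subset {s t : ℕ} (A B : Matrix (Fin s) (Fin t) ℝ)
    (h : ∀ v : Fin t → ℝ, A.mulVec v = 0 → B.mulVec v = 0) :
    ∀ k : ℕ, 0 < k →
      ∀ v : (Fin k → Fin t) → ℝ,
        (kronPowR A k).mulVec v = 0 → (kronPowR B k).mulVec v = 0 := by
  obtain ⟨C, hC⟩ := exists_factor A B h
  intro k _ v hv
  rw [hC, kronPow_mul, ← Matrix.mulVec_mulVec, hv, Matrix.mulVec_zero]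
end
end

section
/- (Non-exactness of the relaxations, linear case) Let G(x) = A_0 + x_1 A_1 + ... + x_n A_n with A_0,...,A_n q×q symmetric real matrices, K = {x ∈ ℝ^n : G(x) ⪰ 0}, f ∈ ℝ[x_1,...,x_n], and f* = min_{x ∈ K} f(x) attained at a minimizer u* ∈ K. Suppose there exists a point u ∈ K with f(u) > f* such that Null(G(u*)) ⊆ Null(G(u)). Then there exist no m ∈ ℕ, real λ_0 ≥ 0, and positive semidefinite real matrices Λ_k of size q^k × q^k (k = 1,...,m) with f(x) − f* = λ_0 + Σ_{k=1}^m ⟨Λ_k, G(x)^{⊗k}⟩; that is, f − f* ∉ H(G). In particular, if G(u*) is positive definite then no such representation exists. -/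
open scoped BigOperators

noncomputable section

/-- The linear polynomial matrix `G(x) = A₀ + ∑ₗ xₗ Aₗ`. -/
def linMat {n q : ℕ} (A0 : Matrix (Fin q) (Fin q) ℝ)
    (A : Fin n → Matrix (Fin q) (Fin q) ℝ) :
    Matrix (Fin q) (Fin q) (MvPolynomial (Fin n) ℝ) :=
  Matrix.of fun i j =>
    MvPolynomial.C (A0 i j) + ∑ l, MvPolynomial.X l * MvPolynomial.C (A l i j)

/-- Entrywise evaluation of a polynomial matrix at a point `x`. -/
def evalMat {n : ℕ} {ι : Type*} (x : Fin n → ℝ)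
    (B : Matrix ι ι (MvPolynomial (Fin n) ℝ)) : Matrix ι ι ℝ :=
  Matrix.of fun i j => MvPolynomial.eval x (B i j)

/-!
Evaluate a certificate `f - f* = λ₀ + ∑ₖ ⟨Λₖ, G^{⊗k}⟩` at `u*`: the left side vanishes and every
term on the right is nonnegative, so `λ₀ = 0` and `⟨Λₖ, G(u*)^{⊗k}⟩ = 0` for all `k`. Since
`Null G(u*) ⊆ Null G(u)`, we have `G(u) ⪯ c G(u*)` in the Loewner order for some `c`, hence
`0 ⪯ G(u)^{⊗k} ⪯ cᵏ G(u*)^{⊗k}`, so every term also vanishes at `u`, giving `f(u) = f*`.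
-/

open Matrix MatrixOrder ComplexOrder
open scoped Kronecker

theorem LinearMap.exists_comp_eq_of_ker_le {K V W U : Type*} [Field K] [AddCommGroup V]
    [Module K V] [AddCommGroup W] [Module K W] [AddCommGroup U] [Module K U]
    {f : V →ₗ[K] W} {g : V →ₗ[K] U}
    (h : LinearMap.ker f ≤ LinearMap.ker g) : ∃ d : W →ₗ[K] U, d ∘ₗ f = g := by
  obtain ⟨l, hl⟩ := ((LinearMap.ker f).liftQ f le_rfl).exists_leftInverse_of_injective
    (Submodule.ker_liftQ_eq_bot _ _ _ le_rfl)
  refine ⟨(LinearMap.ker f).liftQ g h ∘ₗ l, LinearMap.ext fun v => ?_⟩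
  have hlf : l (f v) = Submodule.mkQ _ v := by simpa using congr($hl (Submodule.mkQ _ v))
  simp [hlf]

theorem Matrix.exists_mul_eq_of_ker_le {K l m n : Type*} [Field K] [Fintype m] [Fintype n]
    [DecidableEq m] [DecidableEq n] {S : Matrix m n K} {C : Matrix l n K}
    (h : ∀ v, S *ᵥ v = 0 → C *ᵥ v = 0) : ∃ D : Matrix l m K, C = D * S := by
  obtain ⟨d, hd⟩ := LinearMap.exists_comp_eq_of_ker_le (f := S.mulVecLin) (g := C.mulVecLin) h
  refine ⟨LinearMap.toMatrix' d, Matrix.toLin'.injective ?_⟩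
  rw [toLin'_mul, toLin'_toMatrix', toLin'_apply', toLin'_apply', hd]

theorem Matrix.IsHermitian.exists_le_smul_one {𝕜 n : Type*} [RCLike 𝕜] [Fintype n]
    [DecidableEq n] {A : Matrix n n 𝕜} (hA : A.IsHermitian) : ∃ t : ℝ, A ≤ t • 1 := by
  obtain ⟨t, ht⟩ := A.finite_real_spectrum.bddAbove
  refine ⟨t, ?_⟩
  rw [← Algebra.algebraMap_eq_smul_one]
  exact le_algebraMap_of_spectrum_le (fun x hx => ht hx) hA

theorem Matrix.PosSemidef.exists_le_smul_of_ker_le {𝕜 n : Type*} [RCLike 𝕜] [Fintype n]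
    [DecidableEq n] {P B : Matrix n n 𝕜} (hP : P.PosSemidef) (hB : B.PosSemidef)
    (hker : ∀ v, P *ᵥ v = 0 → B *ᵥ v = 0) : ∃ c : ℝ, B ≤ c • P := by
  -- With `P = S⋆S` and `B = C⋆C`, the kernel hypothesis lets `C` factor as `D * S`.
  obtain ⟨S, rfl⟩ := CStarAlgebra.nonneg_iff_eq_star_mul_self.mp hP.nonneg
  obtain ⟨C, rfl⟩ := CStarAlgebra.nonneg_iff_eq_star_mul_self.mp hB.nonneg
  simp only [star_eq_conjTranspose, conjTranspose_mul_self_mulVec_eq_zero] at hker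
  obtain ⟨D, rfl⟩ := exists_mul_eq_of_ker_le hker
  obtain ⟨t, ht⟩ := (isHermitian_conjTranspose_mul_self D).exists_le_smul_one
  refine ⟨t, ?_⟩
  calc star (D * S) * (D * S) = star S * (star D * D) * S := by simp [mul_assoc]
    _ ≤ star S * (t • 1) * S := star_left_conjugate_le_conjugate ht S
    _ = t • (star S * S) := by simp

section KroneckerPower

theorem kronPow_zero {ι R : Type*} [CommMonoidWithZero R] [DecidableEq ι] (M : Matrix ι ι R) :
    kronPow M 0 = 1 := by
  ext a b
  obtain rfl := Subsingleton.elim a b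
  simp [kronPow]

theorem kronPow_succ {ι R : Type*} [CommSemiring R] (M : Matrix ι ι R) (k : ℕ) :
    kronPow M (k + 1) =
      (M ⊗ₖ kronPow M k).submatrix (fun a => (a 0, Fin.tail a)) (fun a => (a 0, Fin.tail a)) := by
  ext a b
  simp [kronPow, Fin.prod_univ_succ, Fin.tail]

theorem kronPow_smul {ι R : Type*} [CommSemiring R] (c : R) (M : Matrix ι ι R) (k : ℕ) :
    kronPow (c • M) k = c ^ k • kronPow M k := by
  ext a b
  simp [kronPow, Finset.prod_mul_distrib]

variable {𝕜 ι : Type*} [RCLike 𝕜] [Fintype ι] [DecidableEq ι]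

theorem Matrix.PosSemidef.kronPow {M : Matrix ι ι 𝕜} (hM : M.PosSemidef) (k : ℕ) :
    (kronPow M k).PosSemidef := by
  induction k with
  | zero => simpa [kronPow_zero] using PosSemidef.one
  | succ k ih => simpa [kronPow_succ] using (hM.kronecker ih).submatrix _

theorem kronPow_mono {B P : Matrix ι ι 𝕜} (hB : 0 ≤ B) (hBP : B ≤ P) (k : ℕ) :
    kronPow B k ≤ kronPow P k := by
  induction k with
  | zero => rfl
  | succ k ih =>
    have hP : 0 ≤ P := hB.trans hBP
    have hsplit : P ⊗ₖ kronPow P k - B ⊗ₖ kronPow B k =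
        P ⊗ₖ (kronPow P k - kronPow B k) + (P - B) ⊗ₖ kronPow B k := by
      ext; simp only [Matrix.sub_apply, kroneckerMap_apply, Matrix.add_apply]; ring
    have h := ((hP.posSemidef.kronecker ih).add (hBP.kronecker (hB.posSemidef.kronPow k))).submatrix
      (fun a : Fin (k + 1) → ι => (a 0, Fin.tail a))
    rw [← hsplit] at h
    rw [kronPow_succ, kronPow_succ, le_iff]
    exact h

end KroneckerPower

section TracePairing

variable {ι : Type*} [Fintype ι] {Λ N N' : Matrix ι ι ℝ}

theorem Matrix.PosSemidef.trace_transpose_mul_nonneg (hΛ : Λ.PosSemidef) (hN : N.PosSemidef) :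
    0 ≤ (Λᵀ * N).trace := by
  have h := (hΛ.hadamard hN).dotProduct_mulVec_nonneg (fun _ => 1)
  rw [← trace_transpose, transpose_mul, transpose_transpose, trace_mul_comm, ← sum_hadamard_eq]
  simpa [dotProduct, mulVec] using h

theorem Matrix.PosSemidef.trace_transpose_mul_mono (hΛ : Λ.PosSemidef) (h : N' ≤ N) :
    (Λᵀ * N').trace ≤ (Λᵀ * N).trace := by
  simpa [Matrix.mul_sub, trace_sub] using hΛ.trace_transpose_mul_nonneg h

end TracePairing

theorem eval_tipP {n : ℕ} {ι : Type*} [Fintype ι] (x : Fin n → ℝ) (Λ : Matrix ι ι ℝ)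
    (M : Matrix ι ι (MvPolynomial (Fin n) ℝ)) :
    MvPolynomial.eval x (tipP Λ M) = (Λᵀ * evalMat x M).trace := by
  simp only [tipP, map_sum, map_mul, MvPolynomial.eval_C, trace, evalMat, diag_apply, mul_apply,
    transpose_apply, of_apply]
  exact Finset.sum_comm

theorem evalMat_kronPow {n : ℕ} {ι : Type*} (x : Fin n → ℝ)
    (G : Matrix ι ι (MvPolynomial (Fin n) ℝ)) (k : ℕ) :
    evalMat x (kronPow G k) = kronPow (evalMat x G) k := by
  ext a b
  simp [evalMat, kronPow, map_prod]

theorem relaxations_not_exact_general {n q : ℕ}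
    (A0 : Matrix (Fin q) (Fin q) ℝ) (A : Fin n → Matrix (Fin q) (Fin q) ℝ)
    (K : Set (Fin n → ℝ))
    (hK : K = {x | (evalMat x (linMat A0 A)).PosSemidef})
    (f : MvPolynomial (Fin n) ℝ) (fstar : ℝ) (ustar : Fin n → ℝ)
    (hustar : ustar ∈ K)
    (hval : MvPolynomial.eval ustar f = fstar)
    (u : Fin n → ℝ) (hu : u ∈ K)
    (hnonopt : fstar < MvPolynomial.eval u f)
    (hnull : ∀ v : Fin q → ℝ,
      (evalMat ustar (linMat A0 A)).mulVec v = 0 →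
      (evalMat u (linMat A0 A)).mulVec v = 0) :
    f - MvPolynomial.C fstar ∉ Hset (linMat A0 A) := by
  rintro ⟨m, lam0, Λ, hlam0, hΛ, hf⟩
  set G := linMat A0 A
  set φ : (Fin n → ℝ) → ℕ → ℝ := fun x k => ((Λ k)ᵀ * kronPow (evalMat x G) k).trace
  have heval (x : Fin n → ℝ) :
      MvPolynomial.eval x f - fstar = lam0 + ∑ k ∈ Finset.Icc 1 m, φ x k := by
    simpa [φ, eval_tipP, evalMat_kronPow] using congr(MvPolynomial.eval x $hf)
  rw [hK] at hustar hu
  obtain ⟨c, hc⟩ := hustar.exists_le_smul_of_ker_le hu hnull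
  have hφ_nonneg : ∀ k ∈ Finset.Icc 1 m, 0 ≤ φ ustar k := fun k hk =>
    (hΛ k hk).trace_transpose_mul_nonneg (hustar.kronPow k)
  obtain ⟨hlam, hφ_zero⟩ : lam0 = 0 ∧ ∀ k ∈ Finset.Icc 1 m, φ ustar k = 0 := by
    have h := heval ustar
    rwa [hval, sub_self, eq_comm, add_eq_zero_iff_of_nonneg hlam0 (Finset.sum_nonneg hφ_nonneg),
      Finset.sum_eq_zero_iff_of_nonneg hφ_nonneg] at h
  have hφ_nonpos : ∀ k ∈ Finset.Icc 1 m, φ u k ≤ 0 := fun k hk =>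
    calc φ u k ≤ ((Λ k)ᵀ * kronPow (c • evalMat ustar G) k).trace :=
          (hΛ k hk).trace_transpose_mul_mono (kronPow_mono hu.nonneg hc k)
      _ = c ^ k * φ ustar k := by rw [kronPow_smul, Matrix.mul_smul, trace_smul, smul_eq_mul]
      _ = 0 := by rw [hφ_zero k hk, mul_zero]
  linarith [heval u, Finset.sum_nonpos hφ_nonpos]

/-- **Non-exactness of the relaxations (linear case).**
Let `K = {x : G(x) := A₀ + ∑ xₗ Aₗ ⪰ 0}`, let `f* = min_K f` be attained at `u* ∈ K`,
and suppose there is a nonoptimal point `u ∈ K` (`f(u) > f*`) with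
`Null(G(u*)) ⊆ Null(G(u))`.  Then `f − f*` admits no representation
`λ₀ + ∑_{k=1}^m ⟨Λ_k, G(x)^{⊗k}⟩` with `λ₀ ≥ 0` and `Λ_k ⪰ 0`, i.e. `f − f* ∉ H(G)`. -/
theorem relaxations_not_exact {n q : ℕ}
    (A0 : Matrix (Fin q) (Fin q) ℝ) (A : Fin n → Matrix (Fin q) (Fin q) ℝ)
    (hA0 : A0.IsSymm) (hA : ∀ l, (A l).IsSymm)
    (K : Set (Fin n → ℝ))
    (hK : K = {x | (evalMat x (linMat A0 A)).PosSemidef})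
    (f : MvPolynomial (Fin n) ℝ) (fstar : ℝ) (ustar : Fin n → ℝ)
    (hustar : ustar ∈ K)
    (hval : MvPolynomial.eval ustar f = fstar)
    (hmin : ∀ x ∈ K, fstar ≤ MvPolynomial.eval x f)
    (u : Fin n → ℝ) (hu : u ∈ K)
    (hnonopt : fstar < MvPolynomial.eval u f)
    (hnull : ∀ v : Fin q → ℝ,
      (evalMat ustar (linMat A0 A)).mulVec v = 0 →
      (evalMat u (linMat A0 A)).mulVec v = 0) :
    f - MvPolynomial.C fstar ∉ Hset (linMat A0 A) :=
  relaxations_not_exact_general A0 A K hK f fstar ustar hustar hval u hu hnonopt hnull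

end
end
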